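/- arXiv:2505.22968 — 2 statements merged into one kernel-verified Lean document; each statement's English description precedes it below -/
import Mathlib

section
/- In a monoidal setting for dynamic stability with compatible unit clock, every T-flow φ : T × E → E is a solution of its own derivative: φ is a morphism of F-coalgebras from L_E to Dφ, i.e. F(φ) ∘ L_E = Dφ ∘ φ. -/
/-! Let `shift : T × (T × E) → T × E` be `(s, (t, x)) ↦ (s ⊕ t, x)`, so that the flow law reads
`φ ∘ (1 × φ) = φ ∘ shift`. The laxator axioms (naturality, associativity, compatibility with
stationary systems) together with the clock compatibility `F(⊕) ∘ L_T = 1_T ∘ ⊕` make `shift` a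
coalgebra morphism `L_{T×E} → L_E`; by the unit law it restricts to the identity along the
initial-condition inclusion `0_⊕ × id : T × E → T × (T × E)`. Since `L` and `0_⊕ × id` are
natural, restricting `Fφ ∘ L_E ∘ shift = Fφ ∘ F(1 × φ) ∘ L_{T×E}` along `0_⊕ × id` gives
`Fφ ∘ L_E = Fφ ∘ L_E ∘ (0_⊕ × id) ∘ φ = Dφ ∘ φ`. -/

open CategoryTheory CategoryTheory.Limits

universe v u

/-- The data of a monoidal setting for dynamic stability, without the monoid
structure on the time object: an endofunctor `F` with a laxator `ψ` (axiom D5),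
stationary systems `0` (axiom D6), a time object `T` with a distinguished point
`e = 0_⊕` and a unit-clock coalgebra `1_T : T ⟶ F T`. -/
structure PreSetting (C : Type u) [Category.{v} C] [HasFiniteProducts C] where
  /-- the endofunctor -/
  F : C ⥤ C
  /-- the laxator (axiom D5) -/
  ψ : ∀ A B : C, F.obj A ⨯ F.obj B ⟶ F.obj (A ⨯ B)
  ψ_nat : ∀ {A A' B B' : C} (u : A ⟶ A') (w : B ⟶ B'),
    prod.map (F.map u) (F.map w) ≫ ψ A' B' = ψ A B ≫ F.map (prod.map u w)
  ψ_assoc : ∀ A B D : C,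
    prod.map (ψ A B) (𝟙 (F.obj D)) ≫ ψ (A ⨯ B) D ≫
        F.map (prod.associator A B D).hom =
      (prod.associator (F.obj A) (F.obj B) (F.obj D)).hom ≫
        prod.map (𝟙 (F.obj A)) (ψ B D) ≫ ψ A (B ⨯ D)
  /-- stationary systems (axiom D6) -/
  z : ∀ A : C, A ⟶ F.obj A
  z_nat : ∀ {A B : C} (u : A ⟶ B), z A ≫ F.map u = u ≫ z B
  z_mul : ∀ A B : C, prod.map (z A) (z B) ≫ ψ A B = z (A ⨯ B)
  /-- the time object -/
  T : C
  /-- the point `0_⊕` of the time object -/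
  e : ⊤_ C ⟶ T
  /-- the unit clock coalgebra -/
  oneT : T ⟶ F.obj T

namespace PreSetting

variable {C : Type u} [Category.{v} C] [HasFiniteProducts C] (S : PreSetting C)

/-- The coalgebra `L_X := ψ_{T,X} ∘ (1_T × 0_X) : T ⨯ X ⟶ F (T ⨯ X)`. -/
noncomputable def L (X : C) : S.T ⨯ X ⟶ S.F.obj (S.T ⨯ X) :=
  prod.map S.oneT (S.z X) ≫ S.ψ S.T X

/-- The initial-condition inclusion `0_⊕ × id_X : X ⟶ T ⨯ X`. -/
noncomputable def ins (X : C) : X ⟶ S.T ⨯ X :=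
  prod.lift (terminal.from X ≫ S.e) (𝟙 X)

/-- `p` is a morphism of `F`-coalgebras from `(A, f)` to `(B, g)`. -/
def IsCoalgHom {A B : C} (f : A ⟶ S.F.obj A) (g : B ⟶ S.F.obj B)
    (p : A ⟶ B) : Prop :=
  f ≫ S.F.map p = p ≫ g

/-- The derivative of a flow `φ : T ⨯ E ⟶ E`:
`Dφ := Fφ ∘ L_E ∘ (0_⊕ × id_E)`. -/
noncomputable def deriv {E : C} (φ : S.T ⨯ E ⟶ E) : E ⟶ S.F.obj E :=
  S.ins E ≫ S.L E ≫ S.F.map φ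

/-- `T`-completeness of a coalgebra `(A, f)`: every `g : B ⟶ A` extends to a
unique coalgebra morphism `γ : L_B ⟶ f` with initial condition `g`. -/
def TComplete {A : C} (f : A ⟶ S.F.obj A) : Prop :=
  ∀ {B : C} (g : B ⟶ A), ∃! γ : S.T ⨯ B ⟶ A,
    S.IsCoalgHom (S.L B) f γ ∧ S.ins B ≫ γ = g

end PreSetting

/-- A monoidal setting for dynamic stability: a `PreSetting` together with a
monoid structure `(T, ⊕, 0_⊕)` on the time object. -/
structure DynSetting (C : Type u) [Category.{v} C] [HasFiniteProducts C]
    extends PreSetting C where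
  /-- the monoid operation `⊕` on the time object -/
  mul : T ⨯ T ⟶ T
  mul_one : prod.lift (𝟙 T) (terminal.from T ≫ e) ≫ mul = 𝟙 T
  one_mul : prod.lift (terminal.from T ≫ e) (𝟙 T) ≫ mul = 𝟙 T
  mul_assoc : (prod.associator T T T).inv ≫ prod.map mul (𝟙 T) ≫ mul =
    prod.map (𝟙 T) mul ≫ mul

namespace DynSetting

variable {C : Type u} [Category.{v} C] [HasFiniteProducts C] (S : DynSetting C)

/-- `φ : T ⨯ E ⟶ E` is a `T`-flow (monoid action). -/
def IsFlow {E : C} (φ : S.T ⨯ E ⟶ E) : Prop :=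
  S.ins E ≫ φ = 𝟙 E ∧
    prod.map (𝟙 S.T) φ ≫ φ =
      (prod.associator S.T S.T E).inv ≫ prod.map S.mul (𝟙 E) ≫ φ

/-- Compatibility of the unit clock with the monoid structure:
`F(⊕) ∘ L_T = 1_T ∘ ⊕`. -/
def ClockCompat : Prop :=
  S.L S.T ≫ S.F.map S.mul = S.mul ≫ S.oneT

end DynSetting

/- `prod.associator` is elaborated with its own product instances, which `simp` does not unify
with the ambient ones; hence `erw` here and wherever its products appear. -/
theorem CategoryTheory.Limits.prod.lift_lift_comp_associator_inv {C : Type u} [Category.{v} C]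
    [HasBinaryProducts C] {W P Q R : C} (f : W ⟶ P) (g : W ⟶ Q) (h : W ⟶ R) :
    prod.lift f (prod.lift g h) ≫ (prod.associator P Q R).inv = prod.lift (prod.lift f g) h := by
  rw [prod.associator_inv, prod.comp_lift]
  erw [prod.comp_lift, prod.lift_fst, prod.lift_snd_assoc, prod.lift_fst, prod.lift_snd_assoc,
    prod.lift_snd]

theorem CategoryTheory.Limits.prod.associator_inv_naturality {C : Type u} [Category.{v} C]
    [HasBinaryProducts C] {X₁ X₂ X₃ Y₁ Y₂ Y₃ : C} (f₁ : X₁ ⟶ Y₁) (f₂ : X₂ ⟶ Y₂) (f₃ : X₃ ⟶ Y₃) :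
    prod.map f₁ (prod.map f₂ f₃) ≫ (prod.associator Y₁ Y₂ Y₃).inv =
      (prod.associator X₁ X₂ X₃).inv ≫ prod.map (prod.map f₁ f₂) f₃ := by
  rw [Iso.comp_inv_eq, Category.assoc, prod.associator_naturality, Iso.inv_hom_id_assoc]

namespace PreSetting

variable {C : Type u} [Category.{v} C] [HasFiniteProducts C] (S : PreSetting C)

noncomputable def shift (m : S.T ⨯ S.T ⟶ S.T) (X : C) : S.T ⨯ (S.T ⨯ X) ⟶ S.T ⨯ X :=
  (Limits.prod.associator S.T S.T X).inv ≫ prod.map m (𝟙 X)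

theorem comp_ins {X Y : C} (u : X ⟶ Y) :
    u ≫ S.ins Y = S.ins X ≫ prod.map (𝟙 S.T) u := by
  ext <;> simp [ins]

theorem ins_prod_comp_associator_inv (X : C) :
    S.ins (S.T ⨯ X) ≫ (Limits.prod.associator S.T S.T X).inv = prod.map (S.ins S.T) (𝟙 X) := by
  rw [ins, ← prod.lift_fst_snd, prod.lift_lift_comp_associator_inv]
  apply prod.hom_ext
  · erw [prod.lift_fst]
    simp [ins]
  · erw [prod.lift_snd]
    simp

theorem ins_comp_shift {m : S.T ⨯ S.T ⟶ S.T} (hm : S.ins S.T ≫ m = 𝟙 S.T) (X : C) :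
    S.ins (S.T ⨯ X) ≫ S.shift m X = 𝟙 (S.T ⨯ X) := by
  rw [shift, reassoc_of% S.ins_prod_comp_associator_inv, prod.map_map, hm, Category.id_comp,
    prod.map_id_id]

theorem L_map {X Y : C} (u : X ⟶ Y) :
    S.L X ≫ S.F.map (prod.map (𝟙 S.T) u) = prod.map (𝟙 S.T) u ≫ S.L Y := by
  simp only [L, Category.assoc, ← S.ψ_nat, S.F.map_id, prod.map_map_assoc, S.z_nat,
    Category.comp_id, Category.id_comp]

theorem L_prod_comp_associator_inv (X : C) :
    S.L (S.T ⨯ X) ≫ S.F.map (Limits.prod.associator S.T S.T X).inv =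
      (Limits.prod.associator S.T S.T X).inv ≫ prod.map (S.L S.T) (S.z X) ≫
        S.ψ (S.T ⨯ S.T) X := by
  have hψ : prod.map (𝟙 _) (S.ψ S.T X) ≫ S.ψ S.T (S.T ⨯ X) ≫
      S.F.map (Limits.prod.associator S.T S.T X).inv =
        (Limits.prod.associator _ _ _).inv ≫ prod.map (S.ψ S.T S.T) (𝟙 _) ≫
          S.ψ (S.T ⨯ S.T) X := by
    rw [Iso.eq_inv_comp, ← reassoc_of% S.ψ_assoc, ← S.F.map_comp, Iso.hom_inv_id,
      S.F.map_id, Category.comp_id]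
  have hz : prod.map S.oneT (S.z (S.T ⨯ X)) =
      prod.map S.oneT (prod.map (S.z S.T) (S.z X)) ≫ prod.map (𝟙 _) (S.ψ S.T X) := by
    rw [prod.map_map, Category.comp_id, S.z_mul]
  rw [L, hz, Category.assoc, Category.assoc, hψ, reassoc_of% prod.associator_inv_naturality,
    prod.map_map_assoc, Category.comp_id, L]

theorem isCoalgHom_shift {m : S.T ⨯ S.T ⟶ S.T} (hm : S.IsCoalgHom (S.L S.T) S.oneT m)
    (X : C) : S.IsCoalgHom (S.L (S.T ⨯ X)) (S.L X) (S.shift m X) := by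
  have hψ : prod.map (S.L S.T) (S.z X) ≫ S.ψ (S.T ⨯ S.T) X ≫ S.F.map (prod.map m (𝟙 X)) =
      prod.map m (𝟙 X) ≫ S.L X := by
    rw [← S.ψ_nat, S.F.map_id, prod.map_map_assoc, hm, Category.comp_id, L,
      prod.map_map_assoc, Category.id_comp]
  rw [IsCoalgHom, shift, S.F.map_comp, reassoc_of% S.L_prod_comp_associator_inv, hψ,
    Category.assoc]

end PreSetting

/-- **Every flow solves its own derivative.** In a monoidal setting for dynamic
stability with compatible unit clock (`F(⊕) ∘ L_T = 1_T ∘ ⊕`), every `T`-flow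
`φ : T ⨯ E ⟶ E` is a morphism of `F`-coalgebras from `L_E` to its derivative
`Dφ`, i.e. `F(φ) ∘ L_E = Dφ ∘ φ`. -/
theorem flow_is_solution_of_deriv {C : Type u} [Category.{v} C]
    [HasFiniteProducts C] (S : DynSetting C) (hcc : S.ClockCompat)
    {E : C} (φ : S.T ⨯ E ⟶ E) (hφ : S.IsFlow φ) :
    S.toPreSetting.IsCoalgHom (S.L E) (S.toPreSetting.deriv φ) φ := by
  have hshift : S.L (S.T ⨯ E) ≫ S.F.map (S.shift S.mul E) = S.shift S.mul E ≫ S.L E :=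
    S.isCoalgHom_shift hcc E
  have hflow : prod.map (𝟙 S.T) φ ≫ φ = S.shift S.mul E ≫ φ := by
    rw [hφ.2, PreSetting.shift, Category.assoc]
  calc S.L E ≫ S.F.map φ
      = S.ins (S.T ⨯ E) ≫ S.shift S.mul E ≫ S.L E ≫ S.F.map φ := by
        rw [reassoc_of% S.ins_comp_shift S.one_mul]
    _ = S.ins (S.T ⨯ E) ≫ S.L (S.T ⨯ E) ≫ S.F.map (prod.map (𝟙 S.T) φ ≫ φ) := by
        rw [hflow, S.F.map_comp, reassoc_of% hshift]
    _ = S.ins (S.T ⨯ E) ≫ prod.map (𝟙 S.T) φ ≫ S.L E ≫ S.F.map φ := by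
        rw [S.F.map_comp, reassoc_of% S.L_map]
    _ = φ ≫ S.deriv φ := by
        rw [← reassoc_of% S.comp_ins]
        rfl
end

section
/- In a converse setting for stability (lax monoidal F with monoidal natural transformation 0 : id ⇒ F and unit-clock compatibility, with 0₁ : 1 → F1 T-complete), the projection is a solution of the stationary system: for every object X, D(π_X) = 0_X, where π_X : T × X → X is the projection flow. -/
open CategoryTheory CategoryTheory.Limits

universe v u

/-- A converse setting for stability: a monoidal setting for dynamic stability
in which the stationary system `0₁ : 1 ⟶ F 1` is neutral for the laxator
(axiom D7, making `F` lax monoidal and `0` a monoidal natural transformation)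
and `0₁` is `T`-complete (axiom D8). -/
structure ConvSetting (C : Type u) [Category.{v} C] [HasFiniteProducts C]
    extends DynSetting C where
  d7_left : ∀ X : C,
    prod.map (z (⊤_ C)) (𝟙 (F.obj X)) ≫ ψ (⊤_ C) X ≫
        F.map (prod.leftUnitor X).hom = (prod.leftUnitor (F.obj X)).hom
  d7_right : ∀ X : C,
    prod.map (𝟙 (F.obj X)) (z (⊤_ C)) ≫ ψ X (⊤_ C) ≫
        F.map (prod.rightUnitor X).hom = (prod.rightUnitor (F.obj X)).hom
  d8 : toPreSetting.TComplete (z (⊤_ C))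

/-!
By D8 the terminal map `T ⨯ T ⟶ 1` is a coalgebra morphism `L_T ⟶ 0₁`. The clock
compatibility makes `⊕` a coalgebra morphism `L_T ⟶ 1_T` split by `0_⊕ × id`, so `! : T ⟶ 1`
is a coalgebra morphism `1_T ⟶ 0₁`. Tensoring with `0_X` through `ψ` and composing with the
unitor, the projection `π_X = λ ∘ (! × id)` becomes a coalgebra morphism `L_X ⟶ 0_X`, and
evaluating at the initial condition gives `D(π_X) = 0_X`.
-/

namespace PreSetting

variable {C : Type*} [Category C] [HasFiniteProducts C] (S : PreSetting C)

theorem isCoalgHom_z {A B : C} (u : A ⟶ B) : S.IsCoalgHom (S.z A) (S.z B) u :=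
  S.z_nat u

variable {S}

theorem IsCoalgHom.comp {A B D : C} {f : A ⟶ S.F.obj A} {g : B ⟶ S.F.obj B}
    {k : D ⟶ S.F.obj D} {p : A ⟶ B} {q : B ⟶ D} (hp : S.IsCoalgHom f g p)
    (hq : S.IsCoalgHom g k q) : S.IsCoalgHom f k (p ≫ q) := by
  unfold IsCoalgHom at *
  rw [S.F.map_comp, reassoc_of% hp, hq, Category.assoc]

theorem IsCoalgHom.of_comp_of_split {A B D : C} {f : A ⟶ S.F.obj A} {g : B ⟶ S.F.obj B}
    {k : D ⟶ S.F.obj D} {p : A ⟶ B} {q : B ⟶ D} (hp : S.IsCoalgHom f g p) (s : B ⟶ A)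
    (hs : s ≫ p = 𝟙 B) (hpq : S.IsCoalgHom f k (p ≫ q)) : S.IsCoalgHom g k q := by
  unfold IsCoalgHom at *
  calc g ≫ S.F.map q = s ≫ (f ≫ S.F.map p) ≫ S.F.map q := by
        rw [hp, Category.assoc, reassoc_of% hs]
    _ = q ≫ k := by
        rw [Category.assoc, ← S.F.map_comp, hpq, Category.assoc, reassoc_of% hs]

theorem isCoalgHom_L_toTerminal (h : S.TComplete (S.z (⊤_ C))) (B : C) :
    S.IsCoalgHom (S.L B) (S.z (⊤_ C)) (terminal.from (S.T ⨯ B)) := by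
  obtain ⟨γ, ⟨hγ, -⟩, -⟩ := h (terminal.from B)
  rwa [terminal.hom_ext γ (terminal.from _)] at hγ

theorem isCoalgHom_L_prodMap {A : C} {p : S.T ⟶ A} (hp : S.IsCoalgHom S.oneT (S.z A) p)
    (X : C) : S.IsCoalgHom (S.L X) (S.z (A ⨯ X)) (prod.map p (𝟙 X)) := by
  unfold IsCoalgHom L at *
  rw [Category.assoc, ← S.ψ_nat, prod.map_map_assoc, hp, S.F.map_id, Category.comp_id,
    ← Category.id_comp (S.z X), ← prod.map_map_assoc, S.z_mul]

theorem isCoalgHom_L_snd (h : S.IsCoalgHom S.oneT (S.z (⊤_ C)) (terminal.from S.T))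
    (X : C) : S.IsCoalgHom (S.L X) (S.z X) prod.snd := by
  have h' := (isCoalgHom_L_prodMap h X).comp (S.isCoalgHom_z (prod.leftUnitor X).hom)
  simpa using h'

theorem deriv_eq_of_isCoalgHom {E : C} {φ : S.T ⨯ E ⟶ E} {g : E ⟶ S.F.obj E}
    (h : S.IsCoalgHom (S.L E) g φ) : S.deriv φ = S.ins E ≫ φ ≫ g := by
  rw [deriv, h]

end PreSetting

namespace DynSetting

variable {C : Type*} [Category C] [HasFiniteProducts C] {S : DynSetting C}

theorem isCoalgHom_oneT_toTerminal (hcc : S.ClockCompat)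
    (h : S.IsCoalgHom (S.L S.T) (S.z (⊤_ C)) (terminal.from (S.T ⨯ S.T))) :
    S.IsCoalgHom S.oneT (S.z (⊤_ C)) (terminal.from S.T) :=
  PreSetting.IsCoalgHom.of_comp_of_split hcc (S.ins S.T) S.one_mul
    (by rwa [terminal.hom_ext (S.mul ≫ terminal.from S.T) (terminal.from _)])

end DynSetting

theorem deriv_proj_eq_stationary_general {C : Type u} [Category.{v} C]
    [HasFiniteProducts C] (S : ConvSetting C)
    (hcc : S.ClockCompat) (X : C) :
    S.toPreSetting.deriv (prod.snd : S.T ⨯ X ⟶ X) = S.z X := by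
  have hbang : S.IsCoalgHom S.oneT (S.z (⊤_ C)) (terminal.from S.T) :=
    DynSetting.isCoalgHom_oneT_toTerminal hcc
      (PreSetting.isCoalgHom_L_toTerminal S.d8 S.T)
  rw [PreSetting.deriv_eq_of_isCoalgHom (PreSetting.isCoalgHom_L_snd hbang X), PreSetting.ins,
    prod.lift_snd_assoc, Category.id_comp]

/-- **The projection flow solves the stationary system.** In a converse setting
for stability, for every object `X` the derivative of the projection flow
`π_X : T ⨯ X ⟶ X` is the stationary system: `D(π_X) = 0_X`. -/
theorem deriv_proj_eq_stationary {C : Type u} [Category.{v} C]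
    [HasFiniteProducts C] (S : ConvSetting C)
    (hclock : S.toPreSetting.TComplete S.oneT) (hcc : S.ClockCompat) (X : C) :
    S.toPreSetting.deriv (prod.snd : S.T ⨯ X ⟶ X) = S.z X :=
  deriv_proj_eq_stationary_general S hcc X
end
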